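/- Let L ⊆ ℤⁿ be a zonotopal lattice whose real span F = span_ℝ(L) has dimension d, let π : ℝⁿ → F be the orthogonal projection with respect to the standard inner product, and set yᵢ = π(eᵢ). Let X = (x₁,…,xₙ) be a vector configuration spanning ℝ^d, and suppose there exist a linear map A : ℝⁿ → ℝ^d and positive reals λ₁,…,λₙ with xᵢ = λᵢ A(yᵢ) for all i. Then for the weighted inner product (x,y) = Σᵢ λᵢxᵢyᵢ on ℝⁿ there is a linear bijection T : F → ℝ^d with T(DV(L)) = Z(X); i.e., the Dirichlet–Voronoi polytope of (L,(·,·)) is affinely equivalent to the zonotope Z(X). -/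

import Mathlib

/-- The support of an integer vector: the set of its nonzero coordinates. -/
def supp {n : ℕ} (v : Fin n → ℤ) : Set (Fin n) := {i | v i ≠ 0}

/-- `v` is an elementary vector of the lattice `L ⊆ ℤⁿ`: it is a nonzero lattice
vector with entries in `{-1,0,+1}` whose support is minimal among supports of
nonzero lattice vectors. -/
def IsElementary {n : ℕ} (L : AddSubgroup (Fin n → ℤ)) (v : Fin n → ℤ) : Prop :=
  v ∈ L ∧ v ≠ 0 ∧ (∀ i, v i = -1 ∨ v i = 0 ∨ v i = 1) ∧
    ∀ u ∈ L, u ≠ 0 → ¬ (supp u ⊂ supp v)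

/-- A lattice `L ⊆ ℤⁿ` is zonotopal if every nonzero lattice vector's support
contains the support of some elementary vector. -/
def IsZonotopal {n : ℕ} (L : AddSubgroup (Fin n → ℤ)) : Prop :=
  ∀ v ∈ L, v ≠ 0 → ∃ u, IsElementary L u ∧ supp u ⊆ supp v

/-- The weighted inner product on `ℝⁿ` with weights `lam`. -/
def wip {n : ℕ} (lam : Fin n → ℝ) (x y : Fin n → ℝ) : ℝ := ∑ i, lam i * x i * y i

/-- Coordinatewise cast of an integer vector to a real vector. -/
def icast {n : ℕ} (v : Fin n → ℤ) : Fin n → ℝ := fun i => (v i : ℝ)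

/-- The real span `F` of a lattice `L ⊆ ℤⁿ`. -/
def latticeSpan {n : ℕ} (L : AddSubgroup (Fin n → ℤ)) : Submodule ℝ (Fin n → ℝ) :=
  Submodule.span ℝ (icast '' (L : Set (Fin n → ℤ)))

/-- The Dirichlet-Voronoi polytope of a lattice `L ⊆ ℤⁿ` with respect to the
weighted inner product with weights `lam`. -/
def DV {n : ℕ} (L : AddSubgroup (Fin n → ℤ)) (lam : Fin n → ℝ) : Set (Fin n → ℝ) :=
  {x | x ∈ latticeSpan L ∧
    ∀ v ∈ L, wip lam x (icast v) ≤ wip lam (icast v) (icast v) / 2}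

/-- `v` is a strict Voronoi vector of `L` with respect to the weighted inner
product with weights `lam`: `±v` are the unique shortest vectors of `v + 2L`. -/
def IsStrictVoronoi {n : ℕ} (L : AddSubgroup (Fin n → ℤ)) (lam : Fin n → ℝ)
    (v : Fin n → ℤ) : Prop :=
  v ∈ L ∧ v ≠ 0 ∧ ∀ w ∈ L, v + 2 • w ≠ v → v + 2 • w ≠ -v →
    wip lam (icast v) (icast v) <
      wip lam (icast (v + 2 • w)) (icast (v + 2 • w))

/-- Two integer vectors are conformal if their entries never have opposite signs. -/
def IsConformal {n : ℕ} (v w : Fin n → ℤ) : Prop := ∀ i, 0 ≤ v i * w i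

/-- The sign of a real number, as an integer in `{-1,0,+1}`. -/
noncomputable def sgnR (t : ℝ) : ℤ := if 0 < t then 1 else if t < 0 then -1 else 0

/-- A covector of the vector configuration `X`: the sign vector of the values of a
linear functional on the configuration. -/
def IsCovector {n d : ℕ} (X : Fin n → Fin d → ℝ) (s : Fin n → ℤ) : Prop :=
  ∃ f : (Fin d → ℝ) →ₗ[ℝ] ℝ, ∀ i, s i = sgnR (f (X i))

/-- A cocircuit of the vector configuration `X`: a nonzero covector of minimal support. -/
def IsCocircuit {n d : ℕ} (X : Fin n → Fin d → ℝ) (s : Fin n → ℤ) : Prop :=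
  IsCovector X s ∧ s ≠ 0 ∧ ∀ t, IsCovector X t → t ≠ 0 → ¬ (supp t ⊂ supp s)

/-- The lattice in `ℤⁿ` generated by the cocircuits of `X`. -/
def cocircuitLattice {n d : ℕ} (X : Fin n → Fin d → ℝ) : AddSubgroup (Fin n → ℤ) :=
  AddSubgroup.closure {s | IsCocircuit X s}

/-- A linear subspace of `ℝ^d` spanned by a subset of the configuration `X`. -/
def SpannedSubspace {n d : ℕ} (X : Fin n → Fin d → ℝ)
    (W : Submodule ℝ (Fin d → ℝ)) : Prop :=
  ∃ S : Set (Fin n), W = Submodule.span ℝ (X '' S)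

/-- McMullen's condition (II): every `(d-2)`-dimensional subspace spanned by vectors
of `X` is contained in exactly `2` or `3` hyperplanes spanned by vectors of `X`. -/
def ConditionII {n d : ℕ} (X : Fin n → Fin d → ℝ) : Prop :=
  ∀ W : Submodule ℝ (Fin d → ℝ), SpannedSubspace X W → Module.finrank ℝ W = d - 2 →
    {H : Submodule ℝ (Fin d → ℝ) |
        SpannedSubspace X H ∧ Module.finrank ℝ H = d - 1 ∧ W ≤ H}.ncard = 2 ∨
    {H : Submodule ℝ (Fin d → ℝ) |
        SpannedSubspace X H ∧ Module.finrank ℝ H = d - 1 ∧ W ≤ H}.ncard = 3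

/-- The zonotope generated by the vector configuration `X`, i.e. the Minkowski sum
of the segments `conv{xᵢ, -xᵢ}`. -/
def zonotope {n d : ℕ} (X : Fin n → Fin d → ℝ) : Set (Fin d → ℝ) :=
  {z | ∃ c : Fin n → ℝ, (∀ i, |c i| ≤ 1) ∧ z = ∑ i, c i • X i}

/-- `P` tiles `ℝ^d` face-to-face by translations: some family of translates of `P`
covers `ℝ^d`, and any two distinct translates intersect in a common (possibly empty)
exposed face. -/
def TilesFaceToFace {d : ℕ} (P : Set (Fin d → ℝ)) : Prop :=
  ∃ T : Set (Fin d → ℝ),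
    (∀ x, ∃ t ∈ T, x ∈ (t + ·) '' P) ∧
    ∀ s ∈ T, ∀ t ∈ T, s ≠ t →
      IsExposed ℝ ((s + ·) '' P) (((s + ·) '' P) ∩ ((t + ·) '' P)) ∧
      IsExposed ℝ ((t + ·) '' P) (((s + ·) '' P) ∩ ((t + ·) '' P))

/-!
Let `P` be the orthogonal projection onto `F = span L` for the weighted product `wip lam`.
The Dirichlet–Voronoi cell is `P [-1/2, 1/2]ⁿ`. For `⊇` it suffices that `|vᵢ| ≤ vᵢ²` for
integers. For `⊆`, separate a point `x ∉ P [-1/2, 1/2]ⁿ` by Hahn–Banach: on `F` the separating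
functional is `wip lam u` with `u ∈ F`, and its maximum on the cube is `∑ λᵢ |uᵢ| / 2`. But
zonotopality writes every `u ∈ F` as a conformal sum of positive multiples of elementary vectors,
and on those the Voronoi inequalities of `x` say exactly `wip lam x u ≤ ∑ λᵢ |uᵢ| / 2`.

The map `T c = 2 ∑ cᵢ xᵢ` equals `2 A ∘ π ∘ diag λ`, so it kills the weighted orthogonal complement
of `F`. Hence `T ∘ P = T` sends the cube onto `Z(X)`, and `T` is bijective on `F` because the
`xᵢ` span `ℝ^d` and `dim F = d`.
-/

open Function

section WeightedForm

variable {n : ℕ} {lam : Fin n → ℝ}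

lemma wip_comm (lam x y : Fin n → ℝ) : wip lam x y = wip lam y x :=
  Finset.sum_congr rfl fun i _ => by ring

variable (lam) in
def wipForm : LinearMap.BilinForm ℝ (Fin n → ℝ) :=
  LinearMap.mk₂ ℝ (wip lam)
    (fun x y z => by simp only [wip, Pi.add_apply, mul_add, add_mul, Finset.sum_add_distrib])
    (fun c x y => by
      simp only [wip, Pi.smul_apply, smul_eq_mul, Finset.mul_sum]
      exact Finset.sum_congr rfl fun i _ => by ring)
    (fun x y z => by simp only [wip, Pi.add_apply, mul_add, Finset.sum_add_distrib])
    (fun c x y => by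
      simp only [wip, Pi.smul_apply, smul_eq_mul, Finset.mul_sum]
      exact Finset.sum_congr rfl fun i _ => by ring)

@[simp] lemma wipForm_apply (x y : Fin n → ℝ) : wipForm lam x y = wip lam x y := rfl

lemma eq_zero_of_wip_self_eq_zero (hlam : ∀ i, 0 < lam i) {x : Fin n → ℝ}
    (hx : wip lam x x = 0) : x = 0 := by
  have hterm : ∀ i ∈ Finset.univ, 0 ≤ lam i * x i * x i := fun i _ => by
    rw [mul_assoc]; exact mul_nonneg (hlam i).le (mul_self_nonneg _)
  funext i
  have := (Finset.sum_eq_zero_iff_of_nonneg hterm).1 hx i (Finset.mem_univ i)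
  rw [mul_assoc, mul_eq_zero, mul_self_eq_zero] at this
  exact this.resolve_left (hlam i).ne'

lemma wipForm_restrict_nondegenerate (hlam : ∀ i, 0 < lam i) (W : Submodule ℝ (Fin n → ℝ)) :
    ((wipForm lam).restrict W).Nondegenerate :=
  ⟨fun x hx => Subtype.ext (eq_zero_of_wip_self_eq_zero hlam (hx x)),
    fun x hx => Subtype.ext (eq_zero_of_wip_self_eq_zero hlam (hx x))⟩

lemma isCompl_orthogonal_wipForm (hlam : ∀ i, 0 < lam i) (W : Submodule ℝ (Fin n → ℝ)) :
    IsCompl W ((wipForm lam).orthogonal W) :=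
  LinearMap.BilinForm.isCompl_orthogonal_of_restrict_nondegenerate
    (LinearMap.BilinForm.IsSymm.isRefl ⟨wip_comm lam⟩) (wipForm_restrict_nondegenerate hlam W)

end WeightedForm

section WeightedProjection

variable {n : ℕ} {lam : Fin n → ℝ} (hlam : ∀ i, 0 < lam i) (W : Submodule ℝ (Fin n → ℝ))

noncomputable def weightedProj : (Fin n → ℝ) →ₗ[ℝ] (Fin n → ℝ) :=
  W.projection _ (isCompl_orthogonal_wipForm hlam W)

lemma weightedProj_mem (x : Fin n → ℝ) : weightedProj hlam W x ∈ W :=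
  Submodule.projection_apply_mem _ x

lemma sub_weightedProj_mem_orthogonal (x : Fin n → ℝ) :
    x - weightedProj hlam W x ∈ (wipForm lam).orthogonal W :=
  Submodule.sub_projection_mem _ x

lemma wip_weightedProj_right {u : Fin n → ℝ} (hu : u ∈ W) (x : Fin n → ℝ) :
    wip lam u (weightedProj hlam W x) = wip lam u x := by
  have h : wipForm lam u (x - weightedProj hlam W x) = 0 :=
    LinearMap.BilinForm.mem_orthogonal_iff.1 (sub_weightedProj_mem_orthogonal hlam W x) u hu
  rw [map_sub, wipForm_apply, wipForm_apply, sub_eq_zero] at h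
  exact h.symm

theorem mem_weightedProj_image_closedBall {x : Fin n → ℝ} (hxW : x ∈ W)
    (hx : ∀ u ∈ W, wip lam x u ≤ ∑ i, lam i / 2 * |u i|) :
    x ∈ weightedProj hlam W '' Metric.closedBall 0 (1 / 2) := by
  set P := weightedProj hlam W
  by_contra hxQ
  obtain ⟨f, s, hfQ, hsx⟩ := geometric_hahn_banach_closed_point
    ((convex_closedBall 0 (1 / 2)).linear_image P)
    ((isCompact_closedBall 0 (1 / 2)).image P.continuous_of_finiteDimensional).isClosed hxQ
  obtain ⟨u, huW, hu⟩ : ∃ u ∈ W, ∀ w ∈ W, wip lam u w = f w := by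
    set B := (wipForm lam).restrict W
    set u := (B.toDual (wipForm_restrict_nondegenerate hlam W)).symm
      ((f : (Fin n → ℝ) →ₗ[ℝ] ℝ).domRestrict W)
    exact ⟨u, u.2, fun w hw => LinearMap.BilinForm.apply_toDual_symm_apply (B := B) _ ⟨w, hw⟩⟩
  set b : Fin n → ℝ := fun i => (SignType.sign (u i) : ℝ) / 2
  have hb : b ∈ Metric.closedBall 0 (1 / 2) := by
    rw [mem_closedBall_zero_iff, pi_norm_le_iff_of_nonneg (by norm_num)]
    intro i
    rw [Real.norm_eq_abs, abs_div, abs_two]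
    gcongr
    cases SignType.sign (u i) <;> norm_num
  have hfb : f (P b) = ∑ i, lam i / 2 * |u i| := by
    rw [← hu _ (weightedProj_mem hlam W b), wip_weightedProj_right hlam W huW]
    refine Finset.sum_congr rfl fun i _ => ?_
    rw [← self_mul_sign]
    ring
  have hxu := hx u huW
  rw [wip_comm, hu x hxW, ← hfb] at hxu
  linarith [hfQ (P b) ⟨b, hb, rfl⟩]

end WeightedProjection

lemma abs_add_of_mul_nonneg {a b : ℝ} (h : 0 ≤ a * b) : |a + b| = |a| + |b| := by
  refine (sq_eq_sq₀ (abs_nonneg _) (by positivity)).1 ?_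
  rw [add_sq |a|, sq_abs, sq_abs, sq_abs, mul_assoc, ← abs_mul, abs_of_nonneg h, add_sq, mul_assoc]

section Conformal

variable {ι : Type*}

lemma support_sub_smul_ssubset {u e : ι → ℝ} {t : ℝ} {j : ι} (hes : support e ⊆ support u)
    (hj : u j ≠ 0) (hzero : (u - t • e) j = 0) : support (u - t • e) ⊂ support u := by
  refine (Set.ssubset_iff_of_subset fun i hi => ?_).2 ⟨j, hj, fun hj' => hj' hzero⟩
  by_contra hui
  have hei : e i = 0 := notMem_support.1 fun h => hui (hes h)
  simp [notMem_support.1 hui, hei] at hi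

variable [Fintype ι]

lemma exists_sub_smul_conformal {u e : ι → ℝ} (he : ∃ i, 0 < e i * u i) :
    ∃ t : ℝ, 0 < t ∧ (∀ i, 0 ≤ (u - t • e) i * u i) ∧
      (∀ i, 0 < e i * u i → 0 ≤ (u - t • e) i * e i) ∧
      ∃ j, 0 < e j * u j ∧ (u - t • e) j = 0 := by
  classical
  -- `t` is the least ratio `uᵢ / eᵢ` over the coordinates where `e` and `u` have the same sign.
  set A := Finset.univ.filter fun i => 0 < e i * u i
  obtain ⟨j, hjA, hmin⟩ := A.exists_min_image (fun i => u i / e i)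
    (let ⟨i, hi⟩ := he; ⟨i, by simpa [A] using hi⟩)
  have hj : 0 < e j * u j := by simpa [A] using hjA
  have hratio : ∀ i, 0 < e i * u i → u i - u j / e j * e i = e i * (u i / e i - u j / e j) := by
    intro i hi
    have : e i ≠ 0 := left_ne_zero_of_mul hi.ne'
    field_simp
  have hpos : ∀ i, 0 < e i * u i → 0 < u i / e i := fun i hi => by
    have : u i / e i = e i * u i / (e i * e i) := by
      field_simp [left_ne_zero_of_mul hi.ne']
    rw [this]
    exact div_pos hi (mul_self_pos.2 (left_ne_zero_of_mul hi.ne'))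
  have hle : ∀ i, 0 < e i * u i → 0 ≤ u i / e i - u j / e j := fun i hi =>
    sub_nonneg.2 (hmin i (by simpa [A] using hi))
  refine ⟨u j / e j, hpos j hj, fun i => ?_, fun i hi => ?_, j, hj, ?_⟩ <;>
    simp only [Pi.sub_apply, Pi.smul_apply, smul_eq_mul]
  · by_cases hi : 0 < e i * u i
    · rw [hratio i hi, mul_right_comm]
      exact mul_nonneg hi.le (hle i hi)
    · have := (hpos j hj).le
      nlinarith [mul_self_nonneg (u i)]
  · rw [hratio i hi, mul_right_comm]
    exact mul_nonneg (mul_self_nonneg _) (hle i hi)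
  · rw [hratio j hj, sub_self, mul_zero]

variable {W : Submodule ℝ (ι → ℝ)} {E : Set (ι → ℝ)}

theorem exists_conformal_of_forall_support_subset (hEW : E ⊆ W) (hneg : ∀ e ∈ E, -e ∈ E)
    (hE : ∀ u ∈ W, u ≠ 0 → ∃ e ∈ E, e ≠ 0 ∧ support e ⊆ support u) :
    ∀ u ∈ W, u ≠ 0 → ∃ e ∈ E, e ≠ 0 ∧ support e ⊆ support u ∧ ∀ i, 0 ≤ e i * u i := by
  intro u
  induction hk : (support u).ncard using Nat.strong_induction_on generalizing u with
  | _ k ih =>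
  intro hu hu0
  obtain ⟨e, heE, he0, hes, hpos⟩ :
      ∃ e ∈ E, e ≠ 0 ∧ support e ⊆ support u ∧ ∃ i, 0 < e i * u i := by
    obtain ⟨e, heE, he0, hes⟩ := hE u hu hu0
    obtain ⟨i, hi⟩ := Function.ne_iff.1 he0
    rcases (mul_ne_zero hi (hes hi)).lt_or_gt with h | h
    · exact ⟨-e, hneg e heE, neg_ne_zero.2 he0, by rwa [support_neg], i, by simpa using h⟩
    · exact ⟨e, heE, he0, hes, i, h⟩
  obtain ⟨t, ht, hconf, -, j, hj, hzero⟩ := exists_sub_smul_conformal hpos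
  set u' := u - t • e
  by_cases hu' : u' = 0
  · refine ⟨e, heE, he0, hes, fun i => ?_⟩
    have : u i = t * e i := by simpa [u', sub_eq_zero] using congrFun hu' i
    rw [this, mul_left_comm]
    exact mul_nonneg ht.le (mul_self_nonneg _)
  have hsupp : support u' ⊂ support u :=
    support_sub_smul_ssubset hes (right_ne_zero_of_mul hj.ne') hzero
  obtain ⟨e', he'E, he'0, he's, he'conf⟩ :=
    ih _ (hk ▸ Set.ncard_lt_ncard hsupp) u' rfl (W.sub_mem hu (W.smul_mem t (hEW heE))) hu'
  refine ⟨e', he'E, he'0, he's.trans hsupp.subset, fun i => ?_⟩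
  by_cases hu'0 : u' i = 0
  · rw [notMem_support.1 fun h => he's h hu'0, zero_mul]
  · have h := mul_nonneg (he'conf i) (hconf i)
    refine nonneg_of_mul_nonneg_left (b := u' i * u' i) ?_ (mul_self_pos.2 hu'0)
    linarith [show e' i * u' i * (u' i * u i) = e' i * u i * (u' i * u' i) by ring]

theorem le_sum_mul_abs_of_conformal (hEW : E ⊆ W)
    (hE : ∀ u ∈ W, u ≠ 0 → ∃ e ∈ E, e ≠ 0 ∧ support e ⊆ support u ∧ ∀ i, 0 ≤ e i * u i)
    (w : ι → ℝ) (f : (ι → ℝ) →ₗ[ℝ] ℝ) (hf : ∀ e ∈ E, f e ≤ ∑ i, w i * |e i|) :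
    ∀ u ∈ W, f u ≤ ∑ i, w i * |u i| := by
  intro u
  induction hk : (support u).ncard using Nat.strong_induction_on generalizing u with
  | _ k ih =>
  intro hu
  by_cases hu0 : u = 0
  · simp [hu0]
  obtain ⟨e, heE, he0, hes, heconf⟩ := hE u hu hu0
  have hpos : ∀ i, e i ≠ 0 → 0 < e i * u i := fun i hi =>
    (heconf i).lt_of_ne' (mul_ne_zero hi (hes hi))
  obtain ⟨t, ht, -, hconf, j, hj, hzero⟩ :=
    exists_sub_smul_conformal (let ⟨i, hi⟩ := Function.ne_iff.1 he0; ⟨i, hpos i hi⟩)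
  set u' := u - t • e
  have hsupp : support u' ⊂ support u :=
    support_sub_smul_ssubset hes (right_ne_zero_of_mul hj.ne') hzero
  have habs : ∀ i, |u i| = |u' i| + t * |e i| := by
    intro i
    have hconf' : 0 ≤ u' i * (t * e i) := by
      by_cases hei : e i = 0
      · simp [hei]
      · rw [mul_left_comm]
        exact mul_nonneg ht.le (hconf i (hpos i hei))
    rw [← abs_of_pos ht, ← abs_mul, ← abs_add_of_mul_nonneg hconf']
    simp [u']
  calc f u = f u' + t * f e := by rw [map_sub, map_smul, smul_eq_mul, sub_add_cancel]
    _ ≤ ∑ i, w i * |u' i| + t * ∑ i, w i * |e i| := by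
      gcongr
      · exact ih _ (hk ▸ Set.ncard_lt_ncard hsupp) u' rfl (W.sub_mem hu (W.smul_mem t (hEW heE)))
      · exact hf e heE
    _ = ∑ i, w i * |u i| := by
      simp only [habs, Finset.mul_sum, ← Finset.sum_add_distrib]
      exact Finset.sum_congr rfl fun i _ => by ring

end Conformal

section Lattice

variable {n : ℕ} {L : AddSubgroup (Fin n → ℤ)}

lemma support_icast (v : Fin n → ℤ) : support (icast v) = supp v := by
  ext i; simp [icast, supp]

lemma icast_mem_latticeSpan {v : Fin n → ℤ} (hv : v ∈ L) : icast v ∈ latticeSpan L :=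
  Submodule.subset_span ⟨v, hv, rfl⟩

theorem exists_mem_ne_zero_supp_subset {u : Fin n → ℝ} (hu : u ∈ latticeSpan L) (hu0 : u ≠ 0) :
    ∃ v ∈ L, v ≠ 0 ∧ supp v ⊆ support u := by
  -- Otherwise restriction to the zero set `s` of `u` is injective on `L`. A basis of `span L` made
  -- of lattice vectors then stays independent after restriction (over `ℤ`, hence over `ℝ`), so
  -- restriction is injective on `span L`, while it kills `u`.
  by_contra! h
  let s := (support u)ᶜ
  let ρ : (Fin n → ℤ) →ₗ[ℤ] (s → ℤ) := LinearMap.funLeft ℤ ℤ Subtype.val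
  let ρℝ : (Fin n → ℝ) →ₗ[ℝ] (s → ℝ) := LinearMap.funLeft ℝ ℝ Subtype.val
  obtain ⟨b, hbL, hbspan, hbli⟩ := exists_linearIndependent ℝ (icast '' (L : Set (Fin n → ℤ)))
  choose w hwL hw using fun x : b => hbL x.2
  have hwli : LinearIndependent ℤ w := by
    have hcast : (fun x => algebraMap ℤ ℝ ∘ w x) = ((↑) : b → Fin n → ℝ) := funext hw
    exact linearIndependent_algebraMap_comp_iff.1 (hcast ▸ hbli)
  have hρli : LinearIndependent ℤ (ρ ∘ w) := by
    refine hwli.map (Submodule.disjoint_def.2 fun v hv hρv => ?_)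
    have hvL : v ∈ L :=
      (Submodule.span_le (p := L.toIntSubmodule)).2 (Set.range_subset_iff.2 hwL) hv
    by_contra hv0
    exact h v hvL hv0 fun i hi => by_contra fun hui => hi (congrFun hρv ⟨i, hui⟩)
  have hρℝli : LinearIndependent ℝ (ρℝ ∘ ((↑) : b → Fin n → ℝ)) := by
    have hcast : (fun x => algebraMap ℤ ℝ ∘ (ρ ∘ w) x) = ρℝ ∘ ((↑) : b → Fin n → ℝ) := by
      ext x i
      simp [ρ, ρℝ, ← hw x, icast]
    exact hcast ▸ linearIndependent_algebraMap_comp_iff.2 hρli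
  have hdisj := Submodule.range_ker_disjoint hρℝli
  rw [Subtype.range_coe, hbspan] at hdisj
  exact hu0 (Submodule.disjoint_def.1 hdisj u hu (funext fun i => notMem_support.1 i.2))

end Lattice

section Voronoi

variable {n : ℕ} {L : AddSubgroup (Fin n → ℤ)} {lam : Fin n → ℝ}

lemma IsElementary.neg {e : Fin n → ℤ} (he : IsElementary L e) : IsElementary L (-e) := by
  obtain ⟨heL, he0, hunit, hmin⟩ := he
  refine ⟨neg_mem heL, neg_ne_zero.2 he0, fun i => ?_, fun u hu hu0 => ?_⟩
  · rcases hunit i with h | h | h <;> simp [h]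
  · simpa [supp] using hmin u hu hu0

lemma exists_icast_elementary_support_subset (hL : IsZonotopal L) {u : Fin n → ℝ}
    (hu : u ∈ latticeSpan L) (hu0 : u ≠ 0) :
    ∃ e ∈ icast '' {e | IsElementary L e}, e ≠ 0 ∧ support e ⊆ support u := by
  obtain ⟨v, hvL, hv0, hvu⟩ := exists_mem_ne_zero_supp_subset hu hu0
  obtain ⟨e, he, hev⟩ := hL v hvL hv0
  refine ⟨icast e, ⟨e, he, rfl⟩, fun h => he.2.1 (funext fun i => ?_), ?_⟩
  · simpa [icast] using congrFun h i
  · rw [support_icast]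
    exact hev.trans hvu

theorem wip_le_of_mem_DV (hL : IsZonotopal L) {x : Fin n → ℝ} (hx : x ∈ DV L lam)
    {u : Fin n → ℝ} (hu : u ∈ latticeSpan L) : wip lam x u ≤ ∑ i, lam i / 2 * |u i| := by
  have hEW : icast '' {e | IsElementary L e} ⊆ latticeSpan L := by
    rintro _ ⟨e, he, rfl⟩
    exact icast_mem_latticeSpan he.1
  refine le_sum_mul_abs_of_conformal hEW
    (exists_conformal_of_forall_support_subset hEW ?_ fun u hu hu0 =>
      exists_icast_elementary_support_subset hL hu hu0) _ (wipForm lam x) ?_ u hu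
  · rintro _ ⟨e, he, rfl⟩
    exact ⟨-e, he.neg, by ext; simp [icast]⟩
  · rintro _ ⟨e, he, rfl⟩
    refine (hx.2 e he.1).trans_eq ?_
    simp only [wip, Finset.sum_div]
    refine Finset.sum_congr rfl fun i _ => ?_
    rcases he.2.2.1 i with h | h | h <;> simp [icast, h]

theorem DV_eq_weightedProj_image (hL : IsZonotopal L) (hlam : ∀ i, 0 < lam i) :
    DV L lam = weightedProj hlam (latticeSpan L) '' Metric.closedBall 0 (1 / 2) := by
  ext x
  refine ⟨fun hx => mem_weightedProj_image_closedBall hlam _ hx.1 fun u hu =>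
    wip_le_of_mem_DV hL hx hu, ?_⟩
  rintro ⟨b, hb, rfl⟩
  refine ⟨weightedProj_mem hlam _ b, fun v hv => ?_⟩
  rw [wip_comm, wip_weightedProj_right hlam _ (icast_mem_latticeSpan hv)]
  rw [mem_closedBall_zero_iff, pi_norm_le_iff_of_nonneg (by norm_num)] at hb
  simp only [wip, Finset.sum_div]
  refine Finset.sum_le_sum fun i _ => ?_
  have hbi : |b i| ≤ 1 / 2 := hb i
  have hvi : |(v i : ℝ)| ≤ v i * v i := by
    exact_mod_cast (Int.le_self_sq |v i|).trans_eq (by rw [sq_abs, sq])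
  have hvb : (v i : ℝ) * b i ≤ v i * v i / 2 :=
    calc (v i : ℝ) * b i ≤ |(v i : ℝ)| * |b i| := (le_abs_self _).trans_eq (abs_mul _ _)
      _ ≤ v i * v i * (1 / 2) := mul_le_mul hvi hbi (abs_nonneg _) (mul_self_nonneg _)
      _ = v i * v i / 2 := by ring
  calc lam i * icast v i * b i = lam i * (v i * b i) := mul_assoc _ _ _
    _ ≤ lam i * (v i * v i / 2) := mul_le_mul_of_nonneg_left hvb (hlam i).le
    _ = lam i * icast v i * icast v i / 2 := by simp only [icast]; ring

end Voronoi

lemma LinearMap.bijOn_of_surjOn_of_finrank_eq {K V V' : Type*} [Field K] [AddCommGroup V] [Module K V]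
    [AddCommGroup V'] [Module K V'] [FiniteDimensional K V] [FiniteDimensional K V']
    (T : V →ₗ[K] V') {F : Submodule K V} (hF : Module.finrank K F = Module.finrank K V')
    (hT : Set.SurjOn T F Set.univ) : Set.BijOn T F Set.univ := by
  have hsurj : Function.Surjective (T.domRestrict F) := fun y =>
    let ⟨x, hx, hxy⟩ := hT (Set.mem_univ y); ⟨⟨x, hx⟩, hxy⟩
  have hinj := (LinearMap.injective_iff_surjective_of_finrank_eq_finrank hF).2 hsurj
  exact ⟨Set.mapsTo_univ _ _, fun x hx y hy hxy => congrArg Subtype.val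
    (hinj (a₁ := ⟨x, hx⟩) (a₂ := ⟨y, hy⟩) hxy), hT⟩

lemma eq_zero_of_forall_sum_mul_eq_zero {n : ℕ} {W : Submodule ℝ (Fin n → ℝ)}
    {p : (Fin n → ℝ) →ₗ[ℝ] (Fin n → ℝ)} (hmem : ∀ z, p z ∈ W)
    (horth : ∀ z, ∀ w ∈ W, ∑ i, (z - p z) i * w i = 0) {y : Fin n → ℝ}
    (hy : ∀ w ∈ W, ∑ i, y i * w i = 0) : p y = 0 := by
  have h : p y ⬝ᵥ p y = y ⬝ᵥ p y - (y - p y) ⬝ᵥ p y := by rw [sub_dotProduct, sub_sub_cancel]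
  rw [← dotProduct_self_eq_zero, h]
  exact sub_eq_zero.2 ((hy _ (hmem y)).trans (horth y _ (hmem y)).symm)

lemma zonotope_eq_image_closedBall {n d : ℕ} (X : Fin n → Fin d → ℝ) :
    zonotope X = ((2 : ℝ) • Fintype.linearCombination ℝ X) '' Metric.closedBall 0 (1 / 2) := by
  set C := Fintype.linearCombination ℝ X
  have h : ⇑((2 : ℝ) • C) = C ∘ fun b => (2 : ℝ) • b := funext fun b => (map_smul C 2 b).symm
  rw [h, Set.image_comp, Set.image_smul, smul_closedBall _ _ (by norm_num)]
  ext z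
  norm_num [zonotope, C, pi_norm_le_iff_of_nonneg, Fintype.linearCombination_apply, eq_comm]

lemma linearCombination_eq_comp_mulLeft {n d : ℕ} {X : Fin n → Fin d → ℝ} {lam : Fin n → ℝ}
    {A : (Fin n → ℝ) →ₗ[ℝ] (Fin d → ℝ)} {proj : (Fin n → ℝ) →ₗ[ℝ] (Fin n → ℝ)}
    (hXA : ∀ i, X i = lam i • A (proj (Pi.single i 1))) :
    Fintype.linearCombination ℝ X = A ∘ₗ proj ∘ₗ LinearMap.mulLeft ℝ lam := by
  refine LinearMap.pi_ext fun i x => ?_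
  have h : lam * Pi.single i x = (x * lam i) • Pi.single i 1 := by
    ext j
    by_cases hj : j = i <;> simp [hj, mul_comm]
  simp [h, hXA, smul_smul]

lemma map_mul_sub_weightedProj {n : ℕ} {W : Submodule ℝ (Fin n → ℝ)}
    {proj : (Fin n → ℝ) →ₗ[ℝ] (Fin n → ℝ)} (hmem : ∀ z, proj z ∈ W)
    (horth : ∀ z, ∀ w ∈ W, ∑ i, (z - proj z) i * w i = 0) {lam : Fin n → ℝ}
    (hlam : ∀ i, 0 < lam i) (b : Fin n → ℝ) : proj (lam * (b - weightedProj hlam W b)) = 0 :=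
  eq_zero_of_forall_sum_mul_eq_zero hmem horth fun w hw => (wip_comm lam _ _).trans
    (LinearMap.BilinForm.mem_orthogonal_iff.1 (sub_weightedProj_mem_orthogonal hlam W b) w hw)

/-- If the configuration `X` spanning `ℝ^d` is projectively equivalent
(via `A` and positive scalars `lam`) to the configuration of projections `yᵢ = π eᵢ`
onto the real span of a zonotopal lattice `L` of rank `d`, then for the weighted
inner product with weights `lam` the Dirichlet-Voronoi polytope `DV L lam` is
affinely equivalent to the zonotope `Z(X)`. -/
theorem DV_affinelyEquiv_zonotope {n d : ℕ} (L : AddSubgroup (Fin n → ℤ))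
    (hL : IsZonotopal L) (hrank : Module.finrank ℝ (latticeSpan L) = d)
    (proj : (Fin n → ℝ) →ₗ[ℝ] (Fin n → ℝ))
    (hmem : ∀ z, proj z ∈ latticeSpan L)
    (horth : ∀ z, ∀ w ∈ latticeSpan L, ∑ i, (z - proj z) i * w i = 0)
    (X : Fin n → Fin d → ℝ) (hX : Submodule.span ℝ (Set.range X) = ⊤)
    (A : (Fin n → ℝ) →ₗ[ℝ] (Fin d → ℝ)) (lam : Fin n → ℝ) (hlam : ∀ i, 0 < lam i)
    (hXA : ∀ i, X i = lam i • A (proj (Pi.single i 1))) :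
    ∃ T : (Fin n → ℝ) →ₗ[ℝ] (Fin d → ℝ),
      Set.BijOn T (latticeSpan L : Set (Fin n → ℝ)) Set.univ ∧
      T '' DV L lam = zonotope X := by
  set P := weightedProj hlam (latticeSpan L)
  set C := Fintype.linearCombination ℝ X
  have hCP : ∀ b, C (P b) = C b := fun b => by
    have hC : C (b - P b) = 0 := by
      simpa [C, linearCombination_eq_comp_mulLeft hXA] using
        congrArg A (map_mul_sub_weightedProj hmem horth hlam b)
    rwa [map_sub, sub_eq_zero, eq_comm] at hC
  refine ⟨(2 : ℝ) • C, LinearMap.bijOn_of_surjOn_of_finrank_eq _ (by simp [hrank]) ?_, ?_⟩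
  · intro y _
    obtain ⟨c, rfl⟩ : y ∈ LinearMap.range C := by
      rw [Fintype.range_linearCombination, hX]
      trivial
    exact ⟨P ((1 / 2 : ℝ) • c), weightedProj_mem hlam _ _, by simp [hCP, smul_smul]⟩
  · rw [DV_eq_weightedProj_image hL hlam, Set.image_image, zonotope_eq_image_closedBall]
    exact Set.image_congr fun b _ => congrArg ((2 : ℝ) • ·) (hCP b)
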